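/- Let J_s := (1/s)·(all-ones s×s matrix). The map π₁ : M_{m×n} → M_{sm×sn} given by A ↦ J_s ⊗ A satisfies π₁(A + B) = π₁(A) + π₁(B) and π₁(A ⊛ B) = π₁(A) ⊛ π₁(B), i.e., it is a non-unital ring homomorphism from (M_{m×n}, +, ⊛) to (M_{sm×sn}, +, ⊛). -/

import Mathlib

/-!
Since `lcm (l n) (l p) = l · lcm n p`, the DK-STP of two Kronecker products `C ⊗ A` and `D ⊗ B`
sums over `l · lcm n p` indices, which split as pairs `(c, u)` with `c : Fin l` and
`u : Fin (lcm n p)`; the `c`-sum is the ordinary product `C D` and the `u`-sum is `A ⊛ B`.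
With this mixed-product rule `(C ⊗ A) ⊛ (D ⊗ B) = (C D) ⊗ (A ⊛ B)`, multiplicativity of `π₁`
reduces to `J_s J_s = J_s`.
-/

open Matrix Kronecker Finset

noncomputable section

/-- The all-ones column vector of length `k`, viewed as a `k × 1` matrix. -/
def onesCol (k : ℕ) : Matrix (Fin k) (Fin 1) ℝ := Matrix.of fun _ _ => 1

/-- `A ⊗ 1ᵀ_α`, reindexed to an ordinary `Fin`-indexed matrix. -/
def rightExpand {m n : ℕ} (A : Matrix (Fin m) (Fin n) ℝ) (α : ℕ) :
    Matrix (Fin m) (Fin (n * α)) ℝ :=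
  Matrix.reindex (Equiv.prodUnique (Fin m) (Fin 1)) finProdFinEquiv (A ⊗ₖ (onesCol α)ᵀ)

/-- `B ⊗ 1_β`, reindexed to an ordinary `Fin`-indexed matrix. -/
def leftExpand {p q : ℕ} (B : Matrix (Fin p) (Fin q) ℝ) (β : ℕ) :
    Matrix (Fin (p * β)) (Fin q) ℝ :=
  Matrix.reindex finProdFinEquiv (Equiv.prodUnique (Fin q) (Fin 1)) (B ⊗ₖ onesCol β)

theorem dk_dim_eq (n p : ℕ) :
    n * (Nat.lcm n p / n) = p * (Nat.lcm n p / p) := by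
  rw [Nat.mul_div_cancel' (Nat.dvd_lcm_left n p),
    Nat.mul_div_cancel' (Nat.dvd_lcm_right n p)]

/-- The dimension keeping semi-tensor product (DK-STP)
`A ⊛ B := (A ⊗ 1ᵀ_{t/n})(B ⊗ 1_{t/p})`, `t = lcm(n,p)`. -/
def dkstp {m n p q : ℕ} (A : Matrix (Fin m) (Fin n) ℝ) (B : Matrix (Fin p) (Fin q) ℝ) :
    Matrix (Fin m) (Fin q) ℝ :=
  rightExpand A (Nat.lcm n p / n) *
    (leftExpand B (Nat.lcm n p / p)).submatrix (Fin.cast (dk_dim_eq n p)) id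

infixl:70 " ⊛ " => dkstp

/-- The bridge matrix `Ψ_{n×p} := (I_n ⊗ 1ᵀ_{t/n})(I_p ⊗ 1_{t/p})`. -/
def bridge (n p : ℕ) : Matrix (Fin n) (Fin p) ℝ :=
  (1 : Matrix (Fin n) (Fin n) ℝ) ⊛ (1 : Matrix (Fin p) (Fin p) ℝ)

/-- `x ⊗ 1_α`, as a vector of length `m * α`. -/
def vecExpand {m : ℕ} (x : Fin m → ℝ) (α : ℕ) : Fin (m * α) → ℝ :=
  fun i => x (finProdFinEquiv.symm i).1

/-- The VV-STP `x ⊙ y := (x ⊗ 1_{t/m})ᵀ(y ⊗ 1_{t/n})`, `t = lcm(m,n)`. -/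
def vvstp {m n : ℕ} (x : Fin m → ℝ) (y : Fin n → ℝ) : ℝ :=
  vecExpand x (Nat.lcm m n / m) ⬝ᵥ
    fun i => vecExpand y (Nat.lcm m n / n) (Fin.cast (dk_dim_eq m n) i)


/-- `J_s := (1/s) · (all-ones s×s matrix)`. -/
def Jmat (s : ℕ) : Matrix (Fin s) (Fin s) ℝ := Matrix.of fun _ _ => (1 : ℝ) / s

/-- `π₁ : A ↦ J_s ⊗ A`, reindexed to `M_{sm×sn}`. -/
def pi1 {m n : ℕ} (s : ℕ) (A : Matrix (Fin m) (Fin n) ℝ) :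
    Matrix (Fin (s * m)) (Fin (s * n)) ℝ :=
  Matrix.reindex finProdFinEquiv finProdFinEquiv (Jmat s ⊗ₖ A)

lemma dkstp_apply {m n p q : ℕ} (A : Matrix (Fin m) (Fin n) ℝ) (B : Matrix (Fin p) (Fin q) ℝ)
    (i : Fin m) (j : Fin q) :
    (A ⊛ B) i j = ∑ k : Fin (n * (Nat.lcm n p / n)),
      A i k.divNat * B (Fin.cast (dk_dim_eq n p) k).divNat j := by
  simp [dkstp, rightExpand, leftExpand, mul_apply, finProdFinEquiv_symm_apply, onesCol]

def kroneckerFin {α : Type*} [Mul α] {k l m n : ℕ} (C : Matrix (Fin k) (Fin l) α)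
    (A : Matrix (Fin m) (Fin n) α) : Matrix (Fin (k * m)) (Fin (l * n)) α :=
  reindex finProdFinEquiv finProdFinEquiv (C ⊗ₖ A)

section kroneckerFin

variable {α : Type*} {k l m n : ℕ}

@[simp]
lemma kroneckerFin_apply [Mul α] (C : Matrix (Fin k) (Fin l) α) (A : Matrix (Fin m) (Fin n) α)
    (i : Fin (k * m)) (j : Fin (l * n)) :
    kroneckerFin C A i j = C i.divNat j.divNat * A i.modNat j.modNat := by
  simp [kroneckerFin, finProdFinEquiv_symm_apply]

lemma kroneckerFin_add_right [Distrib α] (C : Matrix (Fin k) (Fin l) α)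
    (A B : Matrix (Fin m) (Fin n) α) :
    kroneckerFin C (A + B) = kroneckerFin C A + kroneckerFin C B := by
  ext i j
  simp [mul_add]

end kroneckerFin

lemma Nat.add_mul_div_eq_of_lt {u M N a : ℕ} (c : ℕ) (hM : M = N * a) (hu : u < M) :
    (u + M * c) / a = u / a + N * c ∧ u / a < N := by
  subst hM
  have ha : 0 < a := Nat.pos_of_mul_pos_left (Nat.zero_lt_of_lt hu)
  refine ⟨?_, Nat.div_lt_of_lt_mul (by rwa [mul_comm])⟩
  rw [mul_right_comm, mul_comm _ a, Nat.add_mul_div_left _ _ ha]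

lemma Nat.add_mul_div_div_of_lt {u M N a : ℕ} (c : ℕ) (hM : M = N * a) (hu : u < M) :
    (u + M * c) / a / N = c := by
  obtain ⟨hdiv, hlt⟩ := Nat.add_mul_div_eq_of_lt c hM hu
  rw [hdiv, Nat.add_mul_div_left _ _ (Nat.zero_lt_of_lt hlt), Nat.div_eq_of_lt hlt, zero_add]

lemma Nat.add_mul_div_mod_of_lt {u M N a : ℕ} (c : ℕ) (hM : M = N * a) (hu : u < M) :
    (u + M * c) / a % N = u / a := by
  obtain ⟨hdiv, hlt⟩ := Nat.add_mul_div_eq_of_lt c hM hu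
  rw [hdiv, Nat.add_mul_mod_self_left, Nat.mod_eq_of_lt hlt]

lemma kroneckerFin_dkstp_kroneckerFin {k l r m n p q : ℕ} (C : Matrix (Fin k) (Fin l) ℝ)
    (D : Matrix (Fin l) (Fin r) ℝ) (A : Matrix (Fin m) (Fin n) ℝ) (B : Matrix (Fin p) (Fin q) ℝ) :
    kroneckerFin C A ⊛ kroneckerFin D B = kroneckerFin (C * D) (A ⊛ B) := by
  ext i j
  set t := Nat.lcm n p
  have hdim : l * (n * (t / n)) = l * n * (Nat.lcm (l * n) (l * p) / (l * n)) := by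
    rw [Nat.mul_div_cancel' (Nat.dvd_lcm_left _ _), Nat.mul_div_cancel' (Nat.dvd_lcm_left _ _),
      Nat.lcm_mul_left]
  let e := finProdFinEquiv.trans (finCongr hdim)
  have hα (c : Fin l) : Nat.lcm (l * n) (l * p) / (l * n) = t / n := by
    rw [Nat.lcm_mul_left, Nat.mul_div_mul_left _ _ c.pos]
  have hβ (c : Fin l) : Nat.lcm (l * n) (l * p) / (l * p) = t / p := by
    rw [Nat.lcm_mul_left, Nat.mul_div_mul_left _ _ c.pos]
  have hA (c : Fin l) (u : Fin (n * (t / n))) :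
      (e (c, u)).divNat.divNat = c ∧ (e (c, u)).divNat.modNat = u.divNat := by
    simp only [Fin.ext_iff, Fin.coe_divNat, Fin.coe_modNat, e, Equiv.trans_apply, finCongr_apply,
      Fin.val_cast, finProdFinEquiv_apply_val, hα c]
    exact ⟨Nat.add_mul_div_div_of_lt c rfl u.isLt, Nat.add_mul_div_mod_of_lt c rfl u.isLt⟩
  have hB (c : Fin l) (u : Fin (n * (t / n))) :
      (Fin.cast (dk_dim_eq _ _) (e (c, u))).divNat.divNat = c ∧
        (Fin.cast (dk_dim_eq _ _) (e (c, u))).divNat.modNat =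
          (Fin.cast (dk_dim_eq n p) u).divNat := by
    simp only [Fin.ext_iff, Fin.coe_divNat, Fin.coe_modNat, e, Equiv.trans_apply, finCongr_apply,
      Fin.val_cast, finProdFinEquiv_apply_val, hβ c]
    have hu : (u : ℕ) < n * (t / n) := u.isLt
    exact ⟨Nat.add_mul_div_div_of_lt c (dk_dim_eq n p) hu,
      Nat.add_mul_div_mod_of_lt c (dk_dim_eq n p) hu⟩
  rw [dkstp_apply, ← e.sum_comp, Fintype.sum_prod_type, kroneckerFin_apply, mul_apply, dkstp_apply,
    Finset.sum_mul_sum]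
  refine Finset.sum_congr rfl fun c _ => Finset.sum_congr rfl fun u _ => ?_
  simp only [kroneckerFin_apply, (hA c u).1, (hA c u).2, (hB c u).1, (hB c u).2]
  ring

lemma Jmat_mul_self (s : ℕ) : Jmat s * Jmat s = Jmat s := by
  ext i j
  have hs : (s : ℝ) ≠ 0 := Nat.cast_ne_zero.mpr (Fin.pos i).ne'
  simp only [Jmat, mul_apply, of_apply, Finset.sum_const, Finset.card_univ, Fintype.card_fin,
    nsmul_eq_mul]
  field_simp

lemma pi1_eq_kroneckerFin {m n : ℕ} (s : ℕ) (A : Matrix (Fin m) (Fin n) ℝ) :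
    pi1 s A = kroneckerFin (Jmat s) A :=
  rfl

/-- `π₁ : A ↦ J_s ⊗ A` is a non-unital ring homomorphism from
`(M_{m×n}, +, ⊛)` to `(M_{sm×sn}, +, ⊛)`. -/
theorem stmt11 {m n : ℕ} (s : ℕ) (A B : Matrix (Fin m) (Fin n) ℝ) :
    pi1 s (A + B) = pi1 s A + pi1 s B ∧ pi1 s (A ⊛ B) = pi1 s A ⊛ pi1 s B := by
  simp only [pi1_eq_kroneckerFin]
  rw [kroneckerFin_dkstp_kroneckerFin, Jmat_mul_self]
  exact ⟨kroneckerFin_add_right _ _ _, rfl⟩
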